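/- Let G be a connected bipartite graph with G ≇ K₂, let u and v be adjacent vertices (in opposite partition classes), and write d_u = d(u, Res(G,{u})), d_v = d(v, Res(G,{v})). Then exactly one of the following holds: (i) d_u = d_v and Res(G,{u,v}) is the subgraph induced on V(Res(G,{u})) ∪ V(Res(G,{v})); (ii) d_u = d_v + 1 and Res(G,{u,v}) = Res(G,{u}); (iii) d_v = d_u + 1 and Res(G,{u,v}) = Res(G,{v}). -/
import Mathlib


open SimpleGraph

/-- Distance from a set of vertices `S` to a vertex `v`: `min_{s ∈ S} d(s, v)`. -/
noncomputable def setDist {V : Type*} (G : SimpleGraph V) (S : Set V) (v : V) : ℕ :=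
  sInf ((fun s => G.dist s v) '' S)

/-- The set of vertices at maximal distance from `S`. -/
def resSet {V : Type*} (G : SimpleGraph V) (S : Set V) : Set V :=
  {v | ∀ w, setDist G S w ≤ setDist G S v}

/-- The distance-residual graph: subgraph induced on vertices at maximal distance from `S`. -/
def Res {V : Type*} (G : SimpleGraph V) (S : Set V) : SimpleGraph (resSet G S) :=
  SimpleGraph.induce (resSet G S) G

/-- The eccentricity of a vertex: the maximal distance to any vertex.
For a connected graph this is the distance from `u` to its vertex residual. -/
noncomputable def ecc {V : Type*} (G : SimpleGraph V) (u : V) : ℕ :=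
  sSup (Set.range (G.dist u))

section Aux
variable {V : Type*} {G : SimpleGraph V}

lemma setDist_single (G : SimpleGraph V) (u w : V) : setDist G {u} w = G.dist u w := by
  simp [setDist]

lemma setDist_pair (G : SimpleGraph V) (u v w : V) :
    setDist G {u, v} w = min (G.dist u w) (G.dist v w) := by
  simp only [setDist, Set.image_pair]
  exact csInf_pair _ _

lemma walk_parity (c : G.Coloring (Fin 2)) {x y : V} (p : G.Walk x y) :
    (c x = c y) ↔ Even p.length := by
  induction p with
  | nil => simp
  | @cons a b d h p ih =>
    have hne : c a ≠ c b := c.valid h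
    have key : ∀ s t r : Fin 2, s ≠ t → ((s = r) ↔ ¬(t = r)) := by decide
    rw [Walk.length_cons, Nat.even_add_one, ← ih, key _ _ _ hne]

lemma dist_adj (hG : G.Connected) (hbip : G.Colorable 2) {u v : V} (huv : G.Adj u v) (w : V) :
    G.dist u w = G.dist v w + 1 ∨ G.dist v w = G.dist u w + 1 := by
  obtain ⟨c⟩ := hbip
  have hne : G.dist u w ≠ G.dist v w := by
    obtain ⟨p, hp⟩ := hG.exists_walk_length_eq_dist u w
    obtain ⟨q, hq⟩ := hG.exists_walk_length_eq_dist v w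
    have hu := walk_parity c p
    have hv := walk_parity c q
    have hcv : c u ≠ c v := c.valid huv
    rw [hp] at hu; rw [hq] at hv
    intro h
    rw [h] at hu
    have hiff : (c u = c w) ↔ (c v = c w) := hu.trans hv.symm
    have key : ∀ s t r : Fin 2, s ≠ t → ((s = r) ↔ (t = r)) → False := by decide
    exact key _ _ _ hcv hiff
  have hd1 : G.dist u v = 1 := dist_eq_one_iff_adj.mpr huv
  have hd2 : G.dist v u = 1 := dist_eq_one_iff_adj.mpr huv.symm
  have h1 : G.dist u w ≤ G.dist u v + G.dist v w := hG.dist_triangle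
  have h2 : G.dist v w ≤ G.dist v u + G.dist u w := hG.dist_triangle
  omega

variable [Fintype V]

lemma dist_le_ecc (u w : V) : G.dist u w ≤ ecc G u :=
  le_csSup (Set.finite_range _).bddAbove ⟨w, rfl⟩

lemma exists_ecc (u : V) : ∃ w, G.dist u w = ecc G u := by
  have h : ecc G u ∈ Set.range (G.dist u) :=
    Nat.sSup_mem ⟨_, ⟨u, rfl⟩⟩ (Set.finite_range _).bddAbove
  obtain ⟨w, hw⟩ := h
  exact ⟨w, hw⟩

lemma mem_resSet_single {u w : V} : w ∈ resSet G {u} ↔ G.dist u w = ecc G u := by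
  constructor
  · intro h
    refine le_antisymm (dist_le_ecc u w) ?_
    refine csSup_le ⟨_, ⟨u, rfl⟩⟩ ?_
    rintro x ⟨y, rfl⟩
    have := h y
    simpa [setDist_single] using this
  · intro h y
    simp only [setDist_single, h]
    exact dist_le_ecc u y

end Aux

theorem statement_9 {V : Type*} [Fintype V] (G : SimpleGraph V) (hG : G.Connected)
    (hbip : G.Colorable 2) (hK2 : ¬ Nonempty (G ≃g (⊤ : SimpleGraph (Fin 2))))
    (u v : V) (huv : G.Adj u v) :
    (ecc G u = ecc G v ∧ resSet G {u, v} = resSet G {u} ∪ resSet G {v}) ∨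
    (ecc G u = ecc G v + 1 ∧ resSet G {u, v} = resSet G {u}) ∨
    (ecc G v = ecc G u + 1 ∧ resSet G {u, v} = resSet G {v}) := by
  have hdist : ∀ w, G.dist u w = G.dist v w + 1 ∨ G.dist v w = G.dist u w + 1 :=
    dist_adj hG hbip huv
  have hle_u : ∀ w, G.dist u w ≤ ecc G u := dist_le_ecc u
  have hle_v : ∀ w, G.dist v w ≤ ecc G v := dist_le_ecc v
  obtain ⟨a, ha⟩ := exists_ecc (G := G) u
  obtain ⟨b, hb⟩ := exists_ecc (G := G) v
  have hmem : ∀ w, w ∈ resSet G {u, v} ↔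
      ∀ y, min (G.dist u y) (G.dist v y) ≤ min (G.dist u w) (G.dist v w) := by
    intro w
    simp only [resSet, Set.mem_setOf_eq, setDist_pair]
  have htri : ecc G u = ecc G v ∨ ecc G u = ecc G v + 1 ∨ ecc G v = ecc G u + 1 := by
    have h1 := hle_v a; have h2 := hle_u b; have h3 := hdist a; have h4 := hdist b
    omega
  rcases htri with he | he | he
  · left
    refine ⟨he, ?_⟩
    ext w
    rw [Set.mem_union, hmem, mem_resSet_single, mem_resSet_single]
    constructor
    · intro h
      have h1 := h a
      have h2 := hdist a; have h3 := hdist w; have h4 := hle_v a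
      have h5 := hle_u w; have h6 := hle_v w
      omega
    · intro h y
      have h2 := hdist y; have h3 := hdist w; have h4 := hle_u y
      have h5 := hle_v y; have h6 := hle_u w; have h7 := hle_v w
      omega
  · right; left
    refine ⟨he, ?_⟩
    ext w
    rw [hmem, mem_resSet_single]
    constructor
    · intro h
      have h1 := h a
      have h2 := hdist a; have h3 := hdist w; have h4 := hle_v a
      have h5 := hle_u w; have h6 := hle_v w
      omega
    · intro h y
      have h2 := hdist w; have h3 := hdist y; have h4 := hle_v y; have h5 := hle_v w
      omega
  · right; right
    refine ⟨he, ?_⟩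
    ext w
    rw [hmem, mem_resSet_single]
    constructor
    · intro h
      have h1 := h b
      have h2 := hdist b; have h3 := hdist w; have h4 := hle_u b
      have h5 := hle_u w; have h6 := hle_v w
      omega
    · intro h y
      have h2 := hdist w; have h3 := hdist y; have h4 := hle_u y; have h5 := hle_u w
      omega
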